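/- arXiv:2211.14457 — 3 statements merged into one kernel-verified Lean document; each statement's English description precedes it below -/
import Mathlib

section
/- Let A₁ and A₂ be Banach algebras, and suppose A₁ ⊗̂ A₂ (projective tensor product) is amenable. Then both A₁ and A₂ are amenable, provided each Aᵢ is the image of a continuous epimorphism from A₁ ⊗̂ A₂ (which holds e.g. when the other factor has a nonzero character or bounded approximate identity). Conversely, if A₁ and A₂ are amenable then A₁ ⊗̂ A₂ is amenable. -/
/-- Amenability of a Banach space `A` equipped with a multiplication `mul`:
every continuous derivation from `A` into the dual of any Banach `A`-bimodule `E`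
is inner. -/
def IsAmenableMul (A : Type) [NormedAddCommGroup A] [NormedSpace ℂ A]
    (mul : A → A → A) : Prop :=
  ∀ (E : Type) [NormedAddCommGroup E] [NormedSpace ℂ E],
    ∀ (l r : A →L[ℂ] E →L[ℂ] E),
      (∀ a b, l (mul a b) = (l a).comp (l b)) →
      (∀ a b, r (mul a b) = (r b).comp (r a)) →
      (∀ a b, (l a).comp (r b) = (r b).comp (l a)) →
      ∀ D : A →L[ℂ] (E →L[ℂ] ℂ),
        (∀ a b x, D (mul a b) x = D a (l b x) + D b (r a x)) →
        ∃ Λ : E →L[ℂ] ℂ, ∀ a x, D a x = Λ (r a x) - Λ (l a x)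

/-- Amenability of a Banach algebra. -/
def IsAmenable (A : Type) [NormedRing A] [NormedAlgebra ℂ A] : Prop :=
  IsAmenableMul A (· * ·)

/-!
A continuous epimorphism pulls bimodules and derivations back, so amenability passes to
quotients. Conversely, let `D : T → E*` be a derivation. Amenability of `A₁`, acting through
`a ↦ a ⊗ 1`, lets us subtract an inner derivation so that `D` vanishes on `A₁ ⊗ 1`. Since
`1 ⊗ A₂` commutes with `A₁ ⊗ 1`, the values `D (1 ⊗ b)` then kill the closed span `N` of the
commutators `k • x - x • k` (`k ∈ A₁ ⊗ 1`), and `E ⧸ N` is an `A₂`-bimodule; amenability of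
`A₂` on `(E ⧸ N)*` removes `D` on `1 ⊗ A₂` without disturbing it on `A₁ ⊗ 1`. A derivation
vanishing on both factors vanishes on the dense span of the `a ⊗ b`.
-/

open ContinuousLinearMap

section QuotientLift

variable {𝕜 A E V : Type*} [NontriviallyNormedField 𝕜] [SeminormedAddCommGroup A]
  [NormedSpace 𝕜 A] [SeminormedAddCommGroup E] [NormedSpace 𝕜 E] [SeminormedAddCommGroup V]
  [NormedSpace 𝕜 V] (N : Submodule 𝕜 E)

theorem Submodule.norm_liftQL_apply_le (f : E →L[𝕜] V) (hf : N ≤ f.ker) (x : E ⧸ N) :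
    ‖N.liftQL f hf x‖ ≤ ‖f‖ * ‖x‖ :=
  (QuotientAddGroup.norm_lift_apply_le
    ((f : E →+ V).mkNormedAddGroupHom ‖f‖ f.le_opNorm) (fun _ hy => hf hy) x).trans
    (mul_le_mul_of_nonneg_right (AddMonoidHom.mkNormedAddGroupHom_norm_le _ (norm_nonneg f) _)
      (norm_nonneg x))

noncomputable def Submodule.liftQL₂ (Φ : A →L[𝕜] E →L[𝕜] V) (hΦ : ∀ a, N ≤ (Φ a).ker) :
    A →L[𝕜] (E ⧸ N) →L[𝕜] V :=
  LinearMap.mkContinuous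
    { toFun a := N.liftQL (Φ a) (hΦ a)
      map_add' a b := by ext x; induction x using Submodule.Quotient.induction_on; simp
      map_smul' c a := by ext x; induction x using Submodule.Quotient.induction_on; simp }
    ‖Φ‖ fun a => opNorm_le_bound _ (by positivity) fun x =>
      (N.norm_liftQL_apply_le _ _ x).trans
        (mul_le_mul_of_nonneg_right (Φ.le_opNorm a) (norm_nonneg x))

@[simp]
theorem Submodule.liftQL₂_mk (Φ : A →L[𝕜] E →L[𝕜] V) (hΦ : ∀ a, N ≤ (Φ a).ker) (a : A)
    (x : E) : N.liftQL₂ Φ hΦ a (Submodule.Quotient.mk x) = Φ a x :=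
  rfl

noncomputable def Submodule.mapQL₂ (Φ : A →L[𝕜] E →L[𝕜] E) (hΦ : ∀ a, ∀ x ∈ N, Φ a x ∈ N) :
    A →L[𝕜] (E ⧸ N) →L[𝕜] (E ⧸ N) :=
  N.liftQL₂ ((compL 𝕜 E E (E ⧸ N) N.mkQL).comp Φ) fun a x hx =>
    (Submodule.Quotient.mk_eq_zero N).mpr (hΦ a x hx)

@[simp]
theorem Submodule.mapQL₂_mk (Φ : A →L[𝕜] E →L[𝕜] E) (hΦ : ∀ a, ∀ x ∈ N, Φ a x ∈ N) (a : A)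
    (x : E) : N.mapQL₂ Φ hΦ a (Submodule.Quotient.mk x) = Submodule.Quotient.mk (Φ a x) :=
  rfl

end QuotientLift

section Bimodule

variable {𝕜 A B E : Type*} [NontriviallyNormedField 𝕜] [NormedRing A] [NormedAlgebra 𝕜 A]
  [NormedRing B] [NormedAlgebra 𝕜 B] [SeminormedAddCommGroup E] [NormedSpace 𝕜 E]
  {l r : A →L[𝕜] E →L[𝕜] E} {D D' : A →L[𝕜] E →L[𝕜] 𝕜}

structure IsBimodule (l r : A →L[𝕜] E →L[𝕜] E) : Prop where
  left_mul : ∀ a b x, l (a * b) x = l a (l b x)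
  right_mul : ∀ a b x, r (a * b) x = r b (r a x)
  left_right_comm : ∀ a b x, l a (r b x) = r b (l a x)

/-- The dual module `E →L 𝕜` carries `(a • φ) x = φ (x • a)` and `(φ • a) x = φ (a • x)`, so
`D (a * b) = a • D b + D a • b` reads pointwise as below. -/
def IsDerivation (l r : A →L[𝕜] E →L[𝕜] E) (D : A →L[𝕜] E →L[𝕜] 𝕜) : Prop :=
  ∀ a b x, D (a * b) x = D a (l b x) + D b (r a x)

noncomputable def innerDerivation (l r : A →L[𝕜] E →L[𝕜] E) (Λ : E →L[𝕜] 𝕜) : A →L[𝕜] E →L[𝕜] 𝕜 :=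
  (compL 𝕜 E E 𝕜 Λ).comp (r - l)

@[simp]
theorem innerDerivation_apply (Λ : E →L[𝕜] 𝕜) (a : A) (x : E) :
    innerDerivation l r Λ a x = Λ (r a x) - Λ (l a x) := by
  simp [innerDerivation]

theorem IsBimodule.isDerivation_innerDerivation (hlr : IsBimodule l r) (Λ : E →L[𝕜] 𝕜) :
    IsDerivation l r (innerDerivation l r Λ) := by
  intro a b x
  simp only [innerDerivation_apply, hlr.left_mul, hlr.right_mul, hlr.left_right_comm b a]
  ring

theorem IsDerivation.sub (hD : IsDerivation l r D) (hD' : IsDerivation l r D') :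
    IsDerivation l r (D - D') := by
  intro a b x
  simp only [sub_apply, hD a b x, hD' a b x]
  ring

theorem IsDerivation.map_mul_eq_zero (hD : IsDerivation l r D) {a b : A} (ha : D a = 0)
    (hb : D b = 0) : D (a * b) = 0 := by
  ext x
  simp [hD a b x, ha, hb]

theorem IsBimodule.comp (hlr : IsBimodule l r) (φ : B →L[𝕜] A)
    (hφ : ∀ a b, φ (a * b) = φ a * φ b) : IsBimodule (l.comp φ) (r.comp φ) where
  left_mul a b x := by simp [hφ, hlr.left_mul]
  right_mul a b x := by simp [hφ, hlr.right_mul]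
  left_right_comm a b x := hlr.left_right_comm _ _ x

theorem IsDerivation.comp (hD : IsDerivation l r D) (φ : B →L[𝕜] A)
    (hφ : ∀ a b, φ (a * b) = φ a * φ b) : IsDerivation (l.comp φ) (r.comp φ) (D.comp φ) := by
  intro a b x
  simp [hφ, hD _ _ x]

variable (N : Submodule 𝕜 E)

theorem IsBimodule.mapQL₂ (hlr : IsBimodule l r) (hl : ∀ a, ∀ x ∈ N, l a x ∈ N)
    (hr : ∀ a, ∀ x ∈ N, r a x ∈ N) : IsBimodule (N.mapQL₂ l hl) (N.mapQL₂ r hr) where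
  left_mul a b x := by
    induction x using Submodule.Quotient.induction_on; simp [hlr.left_mul]
  right_mul a b x := by
    induction x using Submodule.Quotient.induction_on; simp [hlr.right_mul]
  left_right_comm a b x := by
    induction x using Submodule.Quotient.induction_on; simp [hlr.left_right_comm]

theorem IsDerivation.liftQL₂ (hD : IsDerivation l r D) (hl : ∀ a, ∀ x ∈ N, l a x ∈ N)
    (hr : ∀ a, ∀ x ∈ N, r a x ∈ N) (hDN : ∀ a, N ≤ (D a).ker) :
    IsDerivation (N.mapQL₂ l hl) (N.mapQL₂ r hr) (N.liftQL₂ D hDN) := by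
  intro a b x
  induction x using Submodule.Quotient.induction_on
  simp [hD a b]

end Bimodule

section Amenable

variable {A B T E : Type} [NormedRing A] [NormedAlgebra ℂ A] [NormedRing B] [NormedAlgebra ℂ B]
  [NormedRing T] [NormedAlgebra ℂ T] [NormedAddCommGroup E] [NormedSpace ℂ E]
  {l r : T →L[ℂ] E →L[ℂ] E} {D : T →L[ℂ] E →L[ℂ] ℂ}

theorem isAmenable_iff :
    IsAmenable A ↔ ∀ (E : Type) [NormedAddCommGroup E] [NormedSpace ℂ E]
      (l r : A →L[ℂ] E →L[ℂ] E), IsBimodule l r →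
      ∀ D, IsDerivation l r D → ∃ Λ, D = innerDerivation l r Λ := by
  constructor
  · intro hA E _ _ l r hlr D hD
    obtain ⟨Λ, hΛ⟩ := hA E l r (fun a b => ext (hlr.left_mul a b))
      (fun a b => ext (hlr.right_mul a b)) (fun a b => ext (hlr.left_right_comm a b)) D hD
    exact ⟨Λ, ext fun a => ext fun x => by simp [hΛ]⟩
  · intro hA E _ _ l r hl hr hlr D hD
    obtain ⟨Λ, rfl⟩ := hA E l r ⟨fun a b x => by simp [hl], fun a b x => by simp [hr],
      fun a b x => congr($(hlr a b) x)⟩ D hD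
    exact ⟨Λ, innerDerivation_apply Λ⟩

theorem isAmenable_of_surjective (π : B →L[ℂ] A) (hπ : ∀ s t, π (s * t) = π s * π t)
    (hs : Function.Surjective π) (hB : IsAmenable B) : IsAmenable A := by
  refine isAmenable_iff.mpr fun E _ _ l r hlr D hD => ?_
  obtain ⟨Λ, hΛ⟩ := isAmenable_iff.mp hB E _ _ (hlr.comp π hπ) _ (hD.comp π hπ)
  refine ⟨Λ, ext fun a => ?_⟩
  obtain ⟨b, rfl⟩ := hs a
  exact congr($hΛ b)

variable (l r) in
noncomputable def commutatorSubmodule (K : Set T) : Submodule ℂ E :=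
  (Submodule.span ℂ {y | ∃ k ∈ K, ∃ x, l k x - r k x = y}).topologicalClosure

instance (K : Set T) : IsClosed (commutatorSubmodule l r K : Set E) :=
  Submodule.isClosed_topologicalClosure _

theorem sub_mem_commutatorSubmodule {K : Set T} {k : T} (hk : k ∈ K) (x : E) :
    l k x - r k x ∈ commutatorSubmodule l r K :=
  Submodule.le_topologicalClosure _ (Submodule.subset_span ⟨k, hk, x, rfl⟩)

theorem commutatorSubmodule_le {K : Set T} {P : Submodule ℂ E} (hP : IsClosed (P : Set E))
    (h : ∀ k ∈ K, ∀ x, l k x - r k x ∈ P) : commutatorSubmodule l r K ≤ P :=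
  Submodule.topologicalClosure_minimal _
    (Submodule.span_le.mpr fun _ ⟨k, hk, x, hy⟩ => hy ▸ h k hk x) hP

variable {K : Set T} {t : T}

theorem IsBimodule.left_mem_commutatorSubmodule (hlr : IsBimodule l r)
    (ht : ∀ k ∈ K, Commute t k) {y : E} (hy : y ∈ commutatorSubmodule l r K) :
    l t y ∈ commutatorSubmodule l r K := by
  refine commutatorSubmodule_le (P := (commutatorSubmodule l r K).comap (l t : E →ₗ[ℂ] E))
    (isClosed_closure.preimage (l t).continuous) (fun k hk x => ?_) hy
  show l t (l k x - r k x) ∈ commutatorSubmodule l r K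
  rw [map_sub, ← hlr.left_mul, (ht k hk).eq, hlr.left_mul, hlr.left_right_comm]
  exact sub_mem_commutatorSubmodule hk _

theorem IsBimodule.right_mem_commutatorSubmodule (hlr : IsBimodule l r)
    (ht : ∀ k ∈ K, Commute t k) {y : E} (hy : y ∈ commutatorSubmodule l r K) :
    r t y ∈ commutatorSubmodule l r K := by
  refine commutatorSubmodule_le (P := (commutatorSubmodule l r K).comap (r t : E →ₗ[ℂ] E))
    (isClosed_closure.preimage (r t).continuous) (fun k hk x => ?_) hy
  show r t (l k x - r k x) ∈ commutatorSubmodule l r K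
  rw [map_sub, ← hlr.right_mul, ← (ht k hk).eq, hlr.right_mul, ← hlr.left_right_comm]
  exact sub_mem_commutatorSubmodule hk _

theorem IsDerivation.commutatorSubmodule_le_ker (hD : IsDerivation l r D)
    (hDK : ∀ k ∈ K, D k = 0) (ht : ∀ k ∈ K, Commute t k) :
    commutatorSubmodule l r K ≤ (D t).ker := by
  refine commutatorSubmodule_le (D t).isClosed_ker fun k hk x => ?_
  have hleft : D (t * k) x = D t (l k x) := by simp [hD t k x, hDK k hk]
  have hright : D (k * t) x = D t (r k x) := by simp [hD k t x, hDK k hk]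
  rw [LinearMap.mem_ker, coe_coe, map_sub, ← hleft, ← hright, (ht k hk).eq, sub_self]

theorem IsAmenable.exists_innerDerivation_of_commute (hA : IsAmenable A) (hlr : IsBimodule l r)
    (hD : IsDerivation l r D) (j : A →L[ℂ] T) (hj : ∀ a b, j (a * b) = j a * j b)
    (hDK : ∀ k ∈ K, D k = 0) (hjK : ∀ a, ∀ k ∈ K, Commute (j a) k) :
    ∃ Λ, (∀ a, D (j a) = innerDerivation l r Λ (j a)) ∧ ∀ k ∈ K, innerDerivation l r Λ k = 0 := by
  set N := commutatorSubmodule l r K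
  have hl (a : A) (y : E) (hy : y ∈ N) := hlr.left_mem_commutatorSubmodule (hjK a) hy
  have hr (a : A) (y : E) (hy : y ∈ N) := hlr.right_mem_commutatorSubmodule (hjK a) hy
  obtain ⟨Λ, hΛ⟩ := isAmenable_iff.mp hA (E ⧸ N) _ _ ((hlr.comp j hj).mapQL₂ N hl hr) _
    ((hD.comp j hj).liftQL₂ N hl hr fun a => hD.commutatorSubmodule_le_ker hDK (hjK a))
  refine ⟨Λ.comp N.mkQL, fun a => ext fun x => congr($hΛ a (Submodule.Quotient.mk x)),
    fun k hk => ext fun x => ?_⟩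
  have hx : r k x - l k x ∈ N := by
    rw [← neg_sub]; exact N.neg_mem (sub_mem_commutatorSubmodule hk x)
  simp only [innerDerivation_apply, comp_apply, Submodule.mkQL_apply, Submodule.mkQ_apply,
    zero_apply]
  rw [← map_sub, ← Submodule.Quotient.mk_sub, (Submodule.Quotient.mk_eq_zero N).mpr hx, map_zero]

end Amenable

theorem isAmenable_of_commute_of_dense {A₁ A₂ T : Type} [NormedRing A₁] [NormedAlgebra ℂ A₁]
    [NormedRing A₂] [NormedAlgebra ℂ A₂] [NormedRing T] [NormedAlgebra ℂ T]
    (hA₁ : IsAmenable A₁) (hA₂ : IsAmenable A₂) (j₁ : A₁ →L[ℂ] T) (j₂ : A₂ →L[ℂ] T)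
    (hj₁ : ∀ a c, j₁ (a * c) = j₁ a * j₁ c) (hj₂ : ∀ b d, j₂ (b * d) = j₂ b * j₂ d)
    (hcomm : ∀ a b, Commute (j₂ b) (j₁ a))
    (hdense : Dense (Submodule.span ℂ (Set.range fun p : A₁ × A₂ => j₁ p.1 * j₂ p.2) : Set T)) :
    IsAmenable T := by
  refine isAmenable_iff.mpr fun E _ _ l r hlr D hD => ?_
  obtain ⟨Λ₁, hΛ₁, -⟩ :=
    hA₁.exists_innerDerivation_of_commute hlr hD j₁ hj₁ (K := ∅) (by simp) (by simp)
  set D₁ := D - innerDerivation l r Λ₁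
  have hD₁ : IsDerivation l r D₁ := hD.sub (hlr.isDerivation_innerDerivation Λ₁)
  have hD₁j₁ (a : A₁) : D₁ (j₁ a) = 0 := by simp [D₁, hΛ₁]
  obtain ⟨Λ₂, hΛ₂, hΛ₂K⟩ := hA₂.exists_innerDerivation_of_commute hlr hD₁ j₂ hj₂
    (K := Set.range j₁) (by rintro _ ⟨a, rfl⟩; exact hD₁j₁ a)
    (by rintro b _ ⟨a, rfl⟩; exact hcomm a b)
  refine ⟨Λ₁ + Λ₂, ?_⟩
  have hsplit : D - innerDerivation l r (Λ₁ + Λ₂) = D₁ - innerDerivation l r Λ₂ := by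
    ext t x
    simp only [D₁, sub_apply, innerDerivation_apply, add_apply]
    ring
  rw [← sub_eq_zero, hsplit]
  refine ext_on hdense ?_
  rintro _ ⟨⟨a, b⟩, rfl⟩
  exact (hD₁.sub (hlr.isDerivation_innerDerivation Λ₂)).map_mul_eq_zero
    (by simp [hD₁j₁, hΛ₂K _ ⟨a, rfl⟩]) (by simp [hΛ₂ b])

theorem projectiveTensor_amenable_iff_general (A₁ A₂ T : Type)
    [NormedRing A₁] [NormedAlgebra ℂ A₁]
    [NormedRing A₂] [NormedAlgebra ℂ A₂]
    [NormedRing T] [NormedAlgebra ℂ T]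
    (π₁ : T →ₗ[ℂ] A₁) (π₂ : T →ₗ[ℂ] A₂)
    (hπ₁m : ∀ s t, π₁ (s * t) = π₁ s * π₁ t) (hπ₂m : ∀ s t, π₂ (s * t) = π₂ s * π₂ t)
    (hπ₁c : Continuous π₁) (hπ₂c : Continuous π₂)
    (hπ₁s : Function.Surjective π₁) (hπ₂s : Function.Surjective π₂)
    (h : A₁ →L[ℂ] A₂ →L[ℂ] T)
    (hmul : ∀ a b c d, h a b * h c d = h (a * c) (b * d))
    (hdense : Dense (Submodule.span ℂ (Set.range fun p : A₁ × A₂ => h p.1 p.2) : Set T)) :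
    IsAmenable T ↔ IsAmenable A₁ ∧ IsAmenable A₂ := by
  refine ⟨fun hT => ⟨isAmenable_of_surjective ⟨π₁, hπ₁c⟩ hπ₁m hπ₁s hT,
    isAmenable_of_surjective ⟨π₂, hπ₂c⟩ hπ₂m hπ₂s hT⟩, fun ⟨hA₁, hA₂⟩ => ?_⟩
  have hfactor : ∀ a b, h a 1 * h 1 b = h a b := by simp [hmul]
  refine isAmenable_of_commute_of_dense hA₁ hA₂ (h.flip 1) (h 1) (fun a c => by simp [hmul])
    (fun b d => by simp [hmul]) (fun a b => by simp [Commute, SemiconjBy, hmul]) ?_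
  simpa only [flip_apply, hfactor] using hdense

/-- for Banach algebras `A₁, A₂`, the projective tensor product
`T = A₁ ⊗̂ A₂` (axiomatized as a Banach algebra receiving a continuous multiplicative
bilinear map with dense span, and admitting continuous epimorphisms onto `A₁` and `A₂`)
is amenable if and only if `A₁` and `A₂` are amenable. -/
theorem projectiveTensor_amenable_iff (A₁ A₂ T : Type)
    [NormedRing A₁] [NormedAlgebra ℂ A₁] [CompleteSpace A₁]
    [NormedRing A₂] [NormedAlgebra ℂ A₂] [CompleteSpace A₂]
    [NormedRing T] [NormedAlgebra ℂ T] [CompleteSpace T]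
    (π₁ : T →ₗ[ℂ] A₁) (π₂ : T →ₗ[ℂ] A₂)
    (hπ₁m : ∀ s t, π₁ (s * t) = π₁ s * π₁ t) (hπ₂m : ∀ s t, π₂ (s * t) = π₂ s * π₂ t)
    (hπ₁c : Continuous π₁) (hπ₂c : Continuous π₂)
    (hπ₁s : Function.Surjective π₁) (hπ₂s : Function.Surjective π₂)
    (h : A₁ →L[ℂ] A₂ →L[ℂ] T)
    (hmul : ∀ a b c d, h a b * h c d = h (a * c) (b * d))
    (hdense : Dense (Submodule.span ℂ (Set.range fun p : A₁ × A₂ => h p.1 p.2) : Set T)) :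
    IsAmenable T ↔ IsAmenable A₁ ∧ IsAmenable A₂ :=
  projectiveTensor_amenable_iff_general A₁ A₂ T π₁ π₂ hπ₁m hπ₂m hπ₁c hπ₂c hπ₁s hπ₂s h hmul hdense
end

section
/- Let (X,d) be a metric space that is not discrete, and let A be a Banach algebra admitting a nonzero character φ. Then there exists a nonzero continuous point derivation on Lip(X,A): i.e., there exist x₀ ∈ X and a nonzero continuous linear functional Q on Lip(X,A) satisfying Q(fg) = ψ(f)Q(g) + ψ(g)Q(f) for all f,g ∈ Lip(X,A), where ψ(f) = φ(f(x₀)). -/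
open scoped NNReal

/-- The supremum norm of a vector-valued function. -/
noncomputable def supNorm {X : Type*} {A : Type*} [NormedRing A] (f : X → A) : ℝ :=
  ⨆ x, ‖f x‖

/-- The Lipschitz seminorm `p(f) = sup_{x ≠ y} ‖f x − f y‖ / d(x,y)`. -/
noncomputable def lipSeminorm {X : Type*} [MetricSpace X] {A : Type*} [NormedRing A]
    (f : X → A) : ℝ :=
  ⨆ p : {q : X × X // q.1 ≠ q.2}, ‖f p.val.1 - f p.val.2‖ / dist p.val.1 p.val.2

/-- The Lipschitz norm `‖f‖ = ‖f‖_∞ + p(f)`. -/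
noncomputable def lipNorm {X : Type*} [MetricSpace X] {A : Type*} [NormedRing A]
    (f : X → A) : ℝ :=
  supNorm f + lipSeminorm f

/-- Membership in `Lip(X, A)`: bounded Lipschitz functions. -/
def MemLip {X : Type*} [MetricSpace X] {A : Type*} [NormedRing A] (f : X → A) : Prop :=
  (∃ C : ℝ, ∀ x, ‖f x‖ ≤ C) ∧ ∃ K : ℝ≥0, LipschitzWith K f

open Filter Topology

private lemma aux_min_lip (p q : ℝ) : |min p 1 - min q 1| ≤ |p - q| := by
  have h1 := le_abs_self (p - q)
  have h2 := neg_abs_le (p - q)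
  rw [abs_sub_le_iff]
  rcases le_total p 1 with hp | hp <;> rcases le_total q 1 with hq | hq <;>
    simp [min_eq_left, min_eq_right, hp, hq] <;> constructor <;> linarith

/-- if `X` is not discrete and `A` has a nonzero continuous character
`φ`, then `Lip(X,A)` admits a nonzero continuous point derivation at the character
`f ↦ φ(f(x₀))` for some `x₀ ∈ X`. -/
theorem lip_nonzero_point_derivation {X : Type*} [MetricSpace X]
    {A : Type*} [NormedRing A] [NormedAlgebra ℂ A] [CompleteSpace A]
    (hX : ∃ x₀ : X, ∀ ε : ℝ, 0 < ε → ∃ x : X, x ≠ x₀ ∧ dist x x₀ < ε)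
    (φ : A →ₗ[ℂ] ℂ) (hφm : ∀ a b : A, φ (a * b) = φ a * φ b)
    (hφc : Continuous φ) (hφ0 : φ ≠ 0) :
    ∃ x₀ : X, ∃ Q : (X → A) →ₗ[ℂ] ℂ,
      (∃ C : ℝ, ∀ f : X → A, MemLip f → ‖Q f‖ ≤ C * lipNorm f) ∧
      (∃ f : X → A, MemLip f ∧ Q f ≠ 0) ∧
      (∀ f g : X → A, MemLip f → MemLip g →
        Q (f * g) = φ (f x₀) * Q g + φ (g x₀) * Q f) := by
  classical
  obtain ⟨x₀, hx₀⟩ := hX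
  have hseq : ∀ n : ℕ, ∃ y : X, y ≠ x₀ ∧ dist y x₀ < 1 / ((n : ℝ) + 1) :=
    fun n => hx₀ _ (by positivity)
  choose x hxne hxd using hseq
  set d : ℕ → ℝ := fun n => dist (x n) x₀ with hd
  have hdpos : ∀ n, 0 < d n := fun n => dist_pos.2 (hxne n)
  have hdlt1 : ∀ n, d n < 1 := fun n => lt_of_lt_of_le (hxd n) (by
    rw [div_le_one (by positivity)]; linarith [Nat.cast_nonneg (α := ℝ) n])
  have hd0 : Tendsto d atTop (𝓝 0) := by
    refine squeeze_zero (fun n => (hdpos n).le) (fun n => (hxd n).le) ?_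
    exact tendsto_one_div_add_atTop_nhds_zero_nat
  have hdC : ∀ n, ((d n : ℝ) : ℂ) ≠ 0 := fun n => by
    exact_mod_cast (hdpos n).ne'
  -- The difference-quotient map S
  let S : (X → A) →ₗ[ℂ] (ℕ → ℂ) :=
    { toFun := fun f n => (φ (f (x n)) - φ (f x₀)) / ((d n : ℝ) : ℂ)
      map_add' := by
        intro f g; funext n
        simp only [Pi.add_apply, map_add]
        ring
      map_smul' := by
        intro c f; funext n
        simp only [Pi.smul_apply, map_smul, RingHom.id_apply, smul_eq_mul]
        ring }
  have hS : ∀ f n, S f n = (φ (f (x n)) - φ (f x₀)) / ((d n : ℝ) : ℂ) := fun _ _ => rfl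
  -- ultrafilter
  set U : Ultrafilter ℕ := Filter.hyperfilter ℕ with hU
  have hUat : (U : Filter ℕ) ≤ atTop := Nat.hyperfilter_le_atTop
  -- generalized limit along U, extended linearly to all sequences
  let lim' : (ℕ → ℂ) → ℂ := fun s =>
    if h : ∃ c : ℂ, Tendsto s (U : Filter ℕ) (𝓝 c) then h.choose else 0
  have hlim : ∀ s c, Tendsto s (U : Filter ℕ) (𝓝 c) → lim' s = c := by
    intro s c hc
    have h : ∃ c : ℂ, Tendsto s (U : Filter ℕ) (𝓝 c) := ⟨c, hc⟩
    simp only [lim', dif_pos h]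
    exact tendsto_nhds_unique h.choose_spec hc
  let V : Submodule ℂ (ℕ → ℂ) :=
    { carrier := { s | ∃ c : ℂ, Tendsto s (U : Filter ℕ) (𝓝 c) }
      add_mem' := fun ⟨a, ha⟩ ⟨b, hb⟩ => ⟨a + b, ha.add hb⟩
      zero_mem' := ⟨0, tendsto_const_nhds⟩
      smul_mem' := fun c s ⟨a, ha⟩ => ⟨c • a, ha.const_smul c⟩ }
  let ℓ : V →ₗ[ℂ] ℂ :=
    { toFun := fun s => lim' s.1
      map_add' := by
        rintro ⟨s, a, ha⟩ ⟨t, b, hb⟩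
        simp only [Submodule.coe_add]
        rw [hlim _ _ ha, hlim _ _ hb]
        exact hlim _ _ (ha.add hb)
      map_smul' := by
        rintro c ⟨s, a, ha⟩
        simp only [SetLike.mk_smul_mk, RingHom.id_apply, smul_eq_mul]
        rw [hlim _ _ ha]
        have h2 : lim' (c • s) = c • a := hlim _ _ (ha.const_smul c)
        simpa using h2 }
  obtain ⟨L, hL⟩ := LinearMap.exists_extend ℓ
  have hLlim : ∀ s c, Tendsto s (U : Filter ℕ) (𝓝 c) → L s = c := by
    intro s c hc
    have hs : s ∈ V := ⟨c, hc⟩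
    have h1 : L s = ℓ ⟨s, hs⟩ := by
      have := congrArg (fun m : V →ₗ[ℂ] ℂ => m ⟨s, hs⟩) hL
      simpa using this
    rw [h1]
    exact hlim s c hc
  -- bound for L on bounded sequences
  have hLbound : ∀ (s : ℕ → ℂ) (M : ℝ), (∀ n, ‖s n‖ ≤ M) → ‖L s‖ ≤ M := by
    intro s M hs
    obtain ⟨c, _, hc⟩ := (isCompact_closedBall (0 : ℂ) M).ultrafilter_le_nhds (U.map s)
      (le_principal_iff.2 (by
        have : s ⁻¹' Metric.closedBall (0 : ℂ) M = Set.univ := by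
          ext n; simpa [Metric.mem_closedBall, dist_zero_right] using hs n
        simp [Ultrafilter.mem_map, this]))
    have hc' : Tendsto s (U : Filter ℕ) (𝓝 c) := hc
    rw [hLlim s c hc']
    exact le_of_tendsto hc'.norm (Eventually.of_forall hs)
  -- the continuous φ as CLM
  let φ' : A →L[ℂ] ℂ := ⟨φ, hφc⟩
  -- bound for S f on Lipschitz f
  have hbound : ∀ f : X → A, MemLip f → ∀ n, ‖S f n‖ ≤ ‖φ'‖ * lipSeminorm f := by
    intro f hf n
    obtain ⟨_, K, hK⟩ := hf
    have hbdd : BddAbove (Set.range fun q : {q : X × X // q.1 ≠ q.2} =>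
        ‖f q.val.1 - f q.val.2‖ / dist q.val.1 q.val.2) := by
      refine ⟨K, ?_⟩
      rintro r ⟨q, rfl⟩
      have hq : 0 < dist q.val.1 q.val.2 := dist_pos.2 q.2
      rw [div_le_iff₀ hq]
      have := hK.dist_le_mul q.val.1 q.val.2
      rwa [dist_eq_norm] at this
    have hqle : ‖f (x n) - f x₀‖ / d n ≤ lipSeminorm f := by
      have := le_ciSup hbdd (⟨(x n, x₀), hxne n⟩ : {q : X × X // q.1 ≠ q.2})
      simpa [lipSeminorm] using this
    have h1 : ‖S f n‖ = ‖φ (f (x n) - f x₀)‖ / d n := by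
      rw [hS, norm_div, map_sub]
      congr 1
      simp [Complex.norm_real, abs_of_pos (hdpos n)]
    rw [h1]
    calc ‖φ (f (x n) - f x₀)‖ / d n ≤ (‖φ'‖ * ‖f (x n) - f x₀‖) / d n := by
          gcongr
          exact φ'.le_opNorm _
      _ = ‖φ'‖ * (‖f (x n) - f x₀‖ / d n) := by ring
      _ ≤ ‖φ'‖ * lipSeminorm f := by
          exact mul_le_mul_of_nonneg_left hqle (norm_nonneg _)
  have hsemi_le : ∀ f : X → A, lipSeminorm f ≤ lipNorm f := by
    intro f
    have h0 : (0 : ℝ) ≤ supNorm f := Real.iSup_nonneg fun _ => norm_nonneg _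
    simp only [lipNorm]
    linarith
  -- the element e with φ e = 1
  have hea : ∃ a : A, φ a ≠ 0 := by
    by_contra h
    push_neg at h
    exact hφ0 (LinearMap.ext fun a => by simpa using h a)
  obtain ⟨a, ha⟩ := hea
  set e : A := (φ a)⁻¹ • a with he
  have hφe : φ e = 1 := by
    rw [he, map_smul, smul_eq_mul, inv_mul_cancel₀ ha]
  -- the witness function
  set f₀ : X → A := fun y => ((min (dist y x₀) 1 : ℝ) : ℂ) • e with hf₀
  have hf₀mem : MemLip f₀ := by
    constructor
    · refine ⟨‖e‖, fun y => ?_⟩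
      rw [hf₀]
      simp only [norm_smul, Complex.norm_real]
      have h1 : |min (dist y x₀) 1| ≤ 1 := by
        rw [abs_of_nonneg (le_min dist_nonneg zero_le_one)]
        exact min_le_right _ _
      calc |min (dist y x₀) 1| * ‖e‖ ≤ 1 * ‖e‖ :=
            mul_le_mul_of_nonneg_right h1 (norm_nonneg _)
        _ = ‖e‖ := one_mul _
    · refine ⟨‖e‖₊, LipschitzWith.of_dist_le_mul fun y z => ?_⟩
      rw [hf₀, dist_eq_norm, ← sub_smul, ← Complex.ofReal_sub, norm_smul,
        Complex.norm_real]
      have h1 : |min (dist y x₀) 1 - min (dist z x₀) 1| ≤ dist y z :=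
        le_trans (aux_min_lip _ _) (abs_dist_sub_le y z x₀)
      calc |min (dist y x₀) 1 - min (dist z x₀) 1| * ‖e‖ ≤ dist y z * ‖e‖ :=
            mul_le_mul_of_nonneg_right h1 (norm_nonneg _)
        _ = (‖e‖₊ : ℝ) * dist y z := by rw [coe_nnnorm]; ring
  have hSf₀ : ∀ n, S f₀ n = 1 := by
    intro n
    have h1 : f₀ (x n) = ((d n : ℝ) : ℂ) • e := by
      simp only [hf₀]
      rw [min_eq_left (hdlt1 n).le]
    have h2 : f₀ x₀ = 0 := by
      rw [hf₀]
      simp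
    rw [hS, h1, h2, map_smul, map_zero, smul_eq_mul, hφe, mul_one, sub_zero,
      div_self (hdC n)]
  -- assemble
  refine ⟨x₀, L.comp S, ⟨‖φ'‖, fun f hf => ?_⟩, ⟨f₀, hf₀mem, ?_⟩, fun f g hf hg => ?_⟩
  · have h1 : ‖L (S f)‖ ≤ ‖φ'‖ * lipSeminorm f := hLbound _ _ (hbound f hf)
    calc ‖(L.comp S) f‖ = ‖L (S f)‖ := rfl
      _ ≤ ‖φ'‖ * lipSeminorm f := h1
      _ ≤ ‖φ'‖ * lipNorm f :=
          mul_le_mul_of_nonneg_left (hsemi_le f) (norm_nonneg _)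
  · have h1 : Tendsto (S f₀) (U : Filter ℕ) (𝓝 1) := by
      have : S f₀ = fun _ => (1 : ℂ) := funext hSf₀
      rw [this]
      exact tendsto_const_nhds
    have : (L.comp S) f₀ = 1 := hLlim _ _ h1
    rw [this]
    exact one_ne_zero
  · -- Leibniz rule
    set t : ℕ → ℂ := S (f * g) - φ (f x₀) • S g - φ (g x₀) • S f with ht
    have htval : ∀ n, t n = ((d n : ℝ) : ℂ) * (S f n * S g n) := by
      intro n
      simp only [ht, Pi.sub_apply, Pi.smul_apply, smul_eq_mul, hS, Pi.mul_apply,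
        hφm]
      field_simp [hdC n]
      ring
    obtain ⟨Mf, hMf⟩ : ∃ M, ∀ n, ‖S f n‖ ≤ M := ⟨_, hbound f hf⟩
    obtain ⟨Mg, hMg⟩ : ∃ M, ∀ n, ‖S g n‖ ≤ M := ⟨_, hbound g hg⟩
    have hMf0 : 0 ≤ Mf := le_trans (norm_nonneg _) (hMf 0)
    have hMg0 : 0 ≤ Mg := le_trans (norm_nonneg _) (hMg 0)
    have ht0 : Tendsto t atTop (𝓝 0) := by
      have hb : ∀ n, ‖t n‖ ≤ d n * (Mf * Mg) := by
        intro n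
        rw [htval n, norm_mul, norm_mul, Complex.norm_real,
          Real.norm_eq_abs, abs_of_pos (hdpos n)]
        have h1 : ‖S f n‖ * ‖S g n‖ ≤ Mf * Mg :=
          mul_le_mul (hMf n) (hMg n) (norm_nonneg _) hMf0
        exact mul_le_mul_of_nonneg_left h1 (hdpos n).le
      exact squeeze_zero_norm hb (by simpa using hd0.mul_const (Mf * Mg))
    have htU : Tendsto t (U : Filter ℕ) (𝓝 0) := ht0.mono_left hUat
    have hLt : L t = 0 := hLlim _ _ htU
    have hexp : L t = (L.comp S) (f * g) - φ (f x₀) * (L.comp S) g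
        - φ (g x₀) * (L.comp S) f := by
      rw [ht]
      simp only [map_sub, map_smul, smul_eq_mul, LinearMap.comp_apply]
    rw [hexp] at hLt
    linear_combination hLt
end

section
/- Let X be a discrete metric space, A a Banach algebra with no nonzero continuous point derivations at characters of A (point amenable), x₀ ∈ X, and φ a character of A. If d is a continuous point derivation on Lip(X,A) at the character f ↦ φ(f(x₀)), then d vanishes on all functions of the form χ_x ⊗ a (the function taking value a at x and 0 elsewhere), for every x ∈ X and a ∈ A. -/
open scoped NNReal

section aux

variable {X : Type*} [MetricSpace X] {A : Type*} [NormedRing A]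

lemma ind_norm_le (x : X) (a : A) (y : X) :
    ‖Set.indicator ({x} : Set X) (fun _ => a) y‖ ≤ ‖a‖ := by
  by_cases hy : y = x <;> simp [Set.indicator_apply, hy]

lemma ind_sub_norm_le (x : X) (a : A) (y z : X) (hyz : y ≠ z) :
    ‖Set.indicator ({x} : Set X) (fun _ => a) y
      - Set.indicator ({x} : Set X) (fun _ => a) z‖ ≤ ‖a‖ := by
  by_cases hy : y = x <;> by_cases hz : z = x
  · exact absurd (hy.trans hz.symm) hyz
  · simp [Set.indicator_apply, hy, hz]
  · simp [Set.indicator_apply, hy, hz]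
  · simp [Set.indicator_apply, hy, hz]

lemma memLip_ind {r : ℝ} (hr : 0 < r) (hsep : ∀ x y : X, x ≠ y → r ≤ dist x y)
    (x : X) (a : A) : MemLip (Set.indicator ({x} : Set X) fun _ => a) := by
  constructor
  · exact ⟨‖a‖, ind_norm_le x a⟩
  · refine ⟨⟨‖a‖ / r, div_nonneg (norm_nonneg a) hr.le⟩, ?_⟩
    refine LipschitzWith.of_dist_le_mul fun y z => ?_
    by_cases hyz : y = z
    · simp [hyz]
    · have h1 : dist (Set.indicator ({x} : Set X) (fun _ => a) y)
          (Set.indicator ({x} : Set X) (fun _ => a) z) ≤ ‖a‖ := by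
        rw [dist_eq_norm]; exact ind_sub_norm_le x a y z hyz
      have h2 : r ≤ dist y z := hsep y z hyz
      calc dist (Set.indicator ({x} : Set X) (fun _ => a) y)
            (Set.indicator ({x} : Set X) (fun _ => a) z) ≤ ‖a‖ := h1
        _ = (‖a‖ / r) * r := by field_simp
        _ ≤ (‖a‖ / r) * dist y z := by
            exact mul_le_mul_of_nonneg_left h2 (div_nonneg (norm_nonneg a) hr.le)

lemma lipNorm_ind_le {r : ℝ} (hr : 0 < r) (hsep : ∀ x y : X, x ≠ y → r ≤ dist x y)
    (x : X) (a : A) :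
    lipNorm (Set.indicator ({x} : Set X) fun _ => a) ≤ ‖a‖ + ‖a‖ / r := by
  have h1 : supNorm (Set.indicator ({x} : Set X) fun _ => a) ≤ ‖a‖ :=
    Real.iSup_le (ind_norm_le x a) (norm_nonneg a)
  have h2 : lipSeminorm (Set.indicator ({x} : Set X) fun _ => a) ≤ ‖a‖ / r := by
    refine Real.iSup_le (fun p => ?_) (div_nonneg (norm_nonneg a) hr.le)
    exact div_le_div₀ (norm_nonneg a) (ind_sub_norm_le x a _ _ p.prop) hr
      (hsep _ _ p.prop)
  exact add_le_add h1 h2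

lemma ind_mul (x : X) (a b : A) :
    (Set.indicator ({x} : Set X) fun _ => a) * (Set.indicator ({x} : Set X) fun _ => b)
      = Set.indicator ({x} : Set X) fun _ => a * b := by
  funext y
  by_cases hy : y = x <;> simp [Set.indicator_apply, hy]

end aux

/-- let `X` be a uniformly discrete metric space, `A` a point amenable
Banach algebra, `x₀ ∈ X`, `φ` a character of `A`, and `d` a continuous point
derivation on `Lip(X,A)` at the character `f ↦ φ(f(x₀))`. Then `d` vanishes on all
functions `χ_x ⊗ a`. -/
theorem lip_point_derivation_vanishes_on_indicators {X : Type*} [MetricSpace X]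
    {A : Type*} [NormedRing A] [NormedAlgebra ℂ A] [CompleteSpace A]
    (hud : ∃ r : ℝ, 0 < r ∧ ∀ x y : X, x ≠ y → r ≤ dist x y)
    (hpa : ∀ ψ : A →ₗ[ℂ] ℂ, (∀ a b : A, ψ (a * b) = ψ a * ψ b) → Continuous ψ → ψ ≠ 0 →
      ∀ q : A →ₗ[ℂ] ℂ, Continuous q →
        (∀ a b : A, q (a * b) = ψ a * q b + ψ b * q a) → q = 0)
    (x₀ : X) (φ : A →ₗ[ℂ] ℂ) (hφm : ∀ a b : A, φ (a * b) = φ a * φ b)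
    (hφc : Continuous φ) (hφ0 : φ ≠ 0)
    (d : (X → A) →ₗ[ℂ] ℂ)
    (hdc : ∃ C : ℝ, ∀ f : X → A, MemLip f → ‖d f‖ ≤ C * lipNorm f)
    (hder : ∀ f g : X → A, MemLip f → MemLip g →
      d (f * g) = φ (f x₀) * d g + φ (g x₀) * d f) :
    ∀ (x : X) (a : A), d (Set.indicator ({x} : Set X) fun _ => a) = 0 := by
  obtain ⟨r, hr, hsep⟩ := hud
  obtain ⟨C, hC⟩ := hdc
  -- an element e with φ e = 1
  obtain ⟨c, hc⟩ : ∃ c : A, φ c ≠ 0 := by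
    by_contra h
    push_neg at h
    exact hφ0 (LinearMap.ext fun a => h a)
  set e : A := (φ c)⁻¹ • c with he
  have hφe : φ e = 1 := by
    simp [he, map_smul, smul_eq_mul, inv_mul_cancel₀ hc]
  -- the linear map a ↦ χ_{x₀} ⊗ a
  let indL : A →ₗ[ℂ] (X → A) :=
    { toFun := fun a => Set.indicator ({x₀} : Set X) fun _ => a
      map_add' := fun a b => by
        funext y; by_cases hy : y = x₀ <;> simp [Set.indicator_apply, hy]
      map_smul' := fun s a => by
        funext y; by_cases hy : y = x₀ <;> simp [Set.indicator_apply, hy] }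
  let q : A →ₗ[ℂ] ℂ := d.comp indL
  have hqbound : ∀ a : A, ‖q a‖ ≤ (max C 0 * (1 + 1/r)) * ‖a‖ := by
    intro a
    have h1 : ‖d (Set.indicator ({x₀} : Set X) fun _ => a)‖
        ≤ C * lipNorm (Set.indicator ({x₀} : Set X) fun _ => a) :=
      hC _ (memLip_ind hr hsep x₀ a)
    have hLnn : 0 ≤ lipNorm (Set.indicator ({x₀} : Set X) fun _ => a) := by
      unfold lipNorm supNorm lipSeminorm
      exact add_nonneg (Real.iSup_nonneg fun y => norm_nonneg _)
        (Real.iSup_nonneg fun p => div_nonneg (norm_nonneg _) dist_nonneg)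
    have h2 : lipNorm (Set.indicator ({x₀} : Set X) fun _ => a) ≤ ‖a‖ + ‖a‖ / r :=
      lipNorm_ind_le hr hsep x₀ a
    calc ‖q a‖ = ‖d (Set.indicator ({x₀} : Set X) fun _ => a)‖ := rfl
      _ ≤ C * lipNorm (Set.indicator ({x₀} : Set X) fun _ => a) := h1
      _ ≤ max C 0 * lipNorm (Set.indicator ({x₀} : Set X) fun _ => a) :=
          mul_le_mul_of_nonneg_right (le_max_left _ _) hLnn
      _ ≤ max C 0 * (‖a‖ + ‖a‖ / r) :=
          mul_le_mul_of_nonneg_left h2 (le_max_right _ _)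
      _ = (max C 0 * (1 + 1/r)) * ‖a‖ := by ring
  have hqc : Continuous q :=
    AddMonoidHomClass.continuous_of_bound q (max C 0 * (1 + 1/r)) hqbound
  have hqder : ∀ a b : A, q (a * b) = φ a * q b + φ b * q a := by
    intro a b
    have : q (a * b) = d ((Set.indicator ({x₀} : Set X) fun _ => a)
        * (Set.indicator ({x₀} : Set X) fun _ => b)) := by
      simp only [q, LinearMap.comp_apply]
      rw [ind_mul]
      rfl
    rw [this, hder _ _ (memLip_ind hr hsep x₀ a) (memLip_ind hr hsep x₀ b)]
    simp [Set.indicator_of_mem, q, indL]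
  have hq0 : q = 0 := hpa φ hφm hφc hφ0 q hqc hqder
  intro x a
  by_cases hx : x = x₀
  · subst hx
    exact congrFun (congrArg DFunLike.coe hq0) a
  · -- use χ_{x₀} ⊗ e
    have hprod : (Set.indicator ({x₀} : Set X) fun _ => e)
        * (Set.indicator ({x} : Set X) fun _ => a) = 0 := by
      funext y
      simp only [Pi.mul_apply, Pi.zero_apply]
      by_cases hy : y = x₀
      · rw [hy]
        rw [show (Set.indicator ({x} : Set X) (fun _ => a) x₀) = 0 from
          Set.indicator_of_notMem
            (by simp only [Set.mem_singleton_iff]; exact fun h => hx h.symm) _, mul_zero]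
      · rw [Set.indicator_of_notMem (by simpa using hy), zero_mul]
    have := hder _ _ (memLip_ind hr hsep x₀ e) (memLip_ind hr hsep x a)
    rw [hprod] at this
    simp only [map_zero] at this
    have hgx₀ : Set.indicator ({x} : Set X) (fun _ => a) x₀ = 0 :=
      Set.indicator_of_notMem (by simp only [Set.mem_singleton_iff]; exact fun h => hx h.symm) _
    rw [Set.indicator_of_mem (Set.mem_singleton x₀), hφe, hgx₀, map_zero] at this
    simpa using this.symm
end
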